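/- arXiv:quant-ph/0205033 — 2 statements merged into one kernel-verified Lean document; each statement's English description precedes it below -/
import Mathlib

section
/- Let ρ_A be a density matrix on ℂ^n, let ψ ∈ ℂ^n be a unit vector, and set ρ_B = |ψ⟩⟨ψ|. Let p = max{ q ∈ [0,1] : ρ_A − q ρ_B is positive semidefinite } (this maximum exists since the set is a nonempty closed subset of [0,1]). Then C(ρ_A, ρ_B) = √p. -/
/-!
Taking `ρA = p |ψ⟩⟨ψ| + (1 - p) τ` and `|ψ⟩⟨ψ| = 1 • |ψ⟩⟨ψ| + 0 • τ` gives overlap `√p`.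
Conversely, a pure state is extremal: if `q σ ≤ |ψ⟩⟨ψ|` with `q > 0`, then `σ = |ψ⟩⟨ψ|`.
So in any decomposition every `σ i` with `q i > 0` is `|ψ⟩⟨ψ|`, their total `ρA`-weight `s`
satisfies `ρA - s |ψ⟩⟨ψ| ≥ 0`, hence `s ≤ p`, and Cauchy–Schwarz bounds the overlap by `√s`.
-/

open Matrix BigOperators
open scoped ComplexOrder

/-- A density matrix: positive semidefinite with trace 1. -/
def IsDensityMatrix {d : Type*} [Fintype d] [DecidableEq d]
    (ρ : Matrix d d ℂ) : Prop :=
  ρ.PosSemidef ∧ ρ.trace = 1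

/-- The compatibility `C(ρA, ρB)`: the supremum, over all finite families of density
matrices `σ` and weight vectors `p`, `q` (nonnegative, summing to 1) with
`∑ i, p i • σ i = ρA` and `∑ i, q i • σ i = ρB`, of the Bhattacharyya overlap
`∑ i, √(p i * q i)`. -/
noncomputable def compat {d : Type*} [Fintype d] [DecidableEq d]
    (ρA ρB : Matrix d d ℂ) : ℝ :=
  sSup { c : ℝ | ∃ (m : ℕ) (σ : Fin m → Matrix d d ℂ) (p q : Fin m → ℝ),
    (∀ i, IsDensityMatrix (σ i)) ∧ (∀ i, 0 ≤ p i) ∧ (∀ i, 0 ≤ q i) ∧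
    ∑ i, p i = 1 ∧ ∑ i, q i = 1 ∧
    ∑ i, p i • σ i = ρA ∧ ∑ i, q i • σ i = ρB ∧
    c = ∑ i, Real.sqrt (p i * q i) }

open scoped Classical in
/-- The positive semidefinite square root of a positive semidefinite matrix
(junk value `0` on non-PSD matrices). -/
noncomputable def psdSqrt {d : Type*} [Fintype d] [DecidableEq d]
    (A : Matrix d d ℂ) : Matrix d d ℂ :=
  if h : A.PosSemidef then
    (h.1.eigenvectorUnitary : Matrix d d ℂ) * diagonal ((↑) ∘ (√·) ∘ h.1.eigenvalues) *
      (star h.1.eigenvectorUnitary : Matrix d d ℂ)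
  else 0

/-- The fidelity `F(ρA, ρB) = Tr √(√ρA ρB √ρA)`. -/
noncomputable def fidelity {d : Type*} [Fintype d] [DecidableEq d]
    (ρA ρB : Matrix d d ℂ) : ℝ :=
  (psdSqrt (psdSqrt ρA * ρB * psdSqrt ρA)).trace.re

/-- The pure-state density matrix `|ψ⟩⟨ψ|` associated to a vector `ψ`. -/
def pureState {d : Type*} [Fintype d] [DecidableEq d] (ψ : d → ℂ) : Matrix d d ℂ :=
  Matrix.vecMulVec ψ (star ψ)

section

variable {d : Type*} [Fintype d] [DecidableEq d]

lemma pureState_mulVec (ψ x : d → ℂ) : pureState ψ *ᵥ x = (star ψ ⬝ᵥ x) • ψ := by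
  simp [pureState, vecMulVec_mulVec]

lemma posSemidef_pureState (ψ : d → ℂ) : (pureState ψ).PosSemidef :=
  posSemidef_vecMulVec_self_star ψ

lemma isDensityMatrix_pureState {ψ : d → ℂ} (hψ : star ψ ⬝ᵥ ψ = 1) :
    IsDensityMatrix (pureState ψ) :=
  ⟨posSemidef_pureState ψ, by rw [pureState, trace_vecMulVec, dotProduct_comm, hψ]⟩

lemma Matrix.PosSemidef.mulVec_eq_zero_of_orthogonal {ψ : d → ℂ} {B : Matrix d d ℂ}
    (hB : B.PosSemidef) (hPB : (pureState ψ - B).PosSemidef) {v : d → ℂ}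
    (hv : star ψ ⬝ᵥ v = 0) : B *ᵥ v = 0 := by
  rw [← hB.dotProduct_mulVec_zero_iff]
  refine le_antisymm ?_ (hB.dotProduct_mulVec_nonneg v)
  have := hPB.dotProduct_mulVec_nonneg v
  rwa [sub_mulVec, dotProduct_sub, pureState_mulVec, hv, zero_smul, dotProduct_zero, zero_sub,
    neg_nonneg] at this

lemma Matrix.PosSemidef.eq_smul_pureState {ψ : d → ℂ} (hψ : star ψ ⬝ᵥ ψ = 1) {B : Matrix d d ℂ}
    (hB : B.PosSemidef) (hPB : (pureState ψ - B).PosSemidef) :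
    B = (star ψ ⬝ᵥ B *ᵥ ψ) • pureState ψ := by
  -- `B` vanishes on `ψ^⊥`, so `B = B P = P B = P B P` for the projection `P = |ψ⟩⟨ψ|`.
  have hBP : B * pureState ψ = B := by
    refine ext_iff_mulVec.2 fun x => ?_
    have hperp : star ψ ⬝ᵥ (x - (star ψ ⬝ᵥ x) • ψ) = 0 := by
      simp [dotProduct_sub, hψ]
    have := hB.mulVec_eq_zero_of_orthogonal hPB hperp
    rw [mulVec_sub, mulVec_smul, sub_eq_zero] at this
    rw [← mulVec_mulVec, pureState_mulVec, mulVec_smul, this]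
  have hPB' : pureState ψ * B = B := by
    have := congrArg (·ᴴ) hBP
    rwa [conjTranspose_mul, hB.1.eq, (posSemidef_pureState ψ).1.eq] at this
  calc B = pureState ψ * B * pureState ψ := by rw [hPB', hBP]
    _ = _ := by
      rw [pureState, mul_assoc, mul_vecMulVec, vecMulVec_mul_vecMulVec, vecMulVec_smul]

lemma IsDensityMatrix.eq_pureState_of_posSemidef_sub_smul {ψ : d → ℂ} (hψ : star ψ ⬝ᵥ ψ = 1)
    {σ : Matrix d d ℂ} (hσ : IsDensityMatrix σ) {q : ℝ} (hq : 0 < q)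
    (h : (pureState ψ - q • σ).PosSemidef) : σ = pureState ψ := by
  have hqσ := (hσ.1.smul hq.le).eq_smul_pureState hψ h
  have htrace : (q : ℂ) = star ψ ⬝ᵥ (q • σ) *ᵥ ψ := by
    simpa [trace_smul, hσ.2, (isDensityMatrix_pureState hψ).2, Complex.real_smul] using
      congrArg trace hqσ
  rw [← htrace, ← Complex.coe_smul] at hqσ
  exact smul_right_injective _ hq.ne' hqσ

lemma eq_pureState_of_sum_smul_eq {ι : Type*} [Fintype ι] {ψ : d → ℂ} (hψ : star ψ ⬝ᵥ ψ = 1)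
    {σ : ι → Matrix d d ℂ} {q : ι → ℝ} (hσ : ∀ i, IsDensityMatrix (σ i)) (hq : ∀ i, 0 ≤ q i)
    (hsum : ∑ i, q i • σ i = pureState ψ) {i : ι} (hi : 0 < q i) : σ i = pureState ψ := by
  classical
  refine (hσ i).eq_pureState_of_posSemidef_sub_smul hψ hi ?_
  rw [← hsum, ← Finset.add_sum_erase _ _ (Finset.mem_univ i), add_sub_cancel_left]
  exact posSemidef_sum _ fun j _ => (hσ j).1.smul (hq j)

lemma Real.sum_sqrt_mul_le_sqrt_sum_filter {ι : Type*} [Fintype ι] {p q : ι → ℝ}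
    (hp : ∀ i, 0 ≤ p i) (hq : ∀ i, 0 ≤ q i) (hqsum : ∑ i, q i = 1) :
    ∑ i, √(p i * q i) ≤ √(∑ i with 0 < q i, p i) := by
  classical
  have hT : ∀ f : ι → ℝ, (∀ i, q i = 0 → f i = 0) → ∑ i with 0 < q i, f i = ∑ i, f i :=
    fun f hf => Finset.sum_filter_of_ne fun i _ hfi => (hq i).lt_of_ne' fun h => hfi (hf i h)
  calc ∑ i, √(p i * q i) = ∑ i with 0 < q i, √(p i) * √(q i) := by
        rw [hT _ fun i h => by simp [h]]
        exact Finset.sum_congr rfl fun i _ => Real.sqrt_mul (hp i) _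
    _ ≤ √(∑ i with 0 < q i, p i) * √(∑ i with 0 < q i, q i) :=
        Real.sum_sqrt_mul_sqrt_le _ hp hq
    _ = √(∑ i with 0 < q i, p i) := by rw [hT q fun _ h => h, hqsum, Real.sqrt_one, mul_one]

lemma sum_sqrt_mul_le_sqrt_of_sum_smul_eq {ι : Type*} [Fintype ι] {ψ : d → ℂ}
    (hψ : star ψ ⬝ᵥ ψ = 1) {ρ : Matrix d d ℂ} {p₀ : ℝ}
    (hp₀ : p₀ ∈ upperBounds {s : ℝ | s ∈ Set.Icc 0 1 ∧ (ρ - s • pureState ψ).PosSemidef})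
    {σ : ι → Matrix d d ℂ} {p q : ι → ℝ} (hσ : ∀ i, IsDensityMatrix (σ i))
    (hp : ∀ i, 0 ≤ p i) (hq : ∀ i, 0 ≤ q i) (hpsum : ∑ i, p i = 1) (hqsum : ∑ i, q i = 1)
    (hρ : ∑ i, p i • σ i = ρ) (hψσ : ∑ i, q i • σ i = pureState ψ) :
    ∑ i, √(p i * q i) ≤ √p₀ := by
  classical
  set s := ∑ i with 0 < q i, p i
  have hsupp : ∑ i with 0 < q i, p i • σ i = s • pureState ψ := by
    rw [Finset.sum_smul]
    refine Finset.sum_congr rfl fun i hi => ?_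
    rw [eq_pureState_of_sum_smul_eq hψ hσ hq hψσ (Finset.mem_filter.1 hi).2]
  have hs : (ρ - s • pureState ψ).PosSemidef := by
    rw [← hρ, ← Finset.sum_filter_add_sum_filter_not _ (0 < q ·), hsupp, add_sub_cancel_left]
    exact posSemidef_sum _ fun j _ => (hσ j).1.smul (hp j)
  have hs1 : s ≤ 1 :=
    hpsum ▸ Finset.sum_le_sum_of_subset_of_nonneg (Finset.filter_subset _ _) fun i _ _ => hp i
  calc ∑ i, √(p i * q i) ≤ √s := Real.sum_sqrt_mul_le_sqrt_sum_filter hp hq hqsum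
    _ ≤ √p₀ := Real.sqrt_le_sqrt (hp₀ ⟨⟨Finset.sum_nonneg fun i _ => hp i, hs1⟩, hs⟩)

lemma exists_isDensityMatrix_smul_add_smul {ρ σ : Matrix d d ℂ} (hρ : ρ.trace = 1)
    (hσ : IsDensityMatrix σ) {p : ℝ} (hp : p ≤ 1) (h : (ρ - p • σ).PosSemidef) :
    ∃ τ, IsDensityMatrix τ ∧ p • σ + (1 - p) • τ = ρ := by
  rcases hp.eq_or_lt with rfl | hp
  · rw [one_smul] at h
    have hρσ : ρ - σ = 0 := h.trace_eq_zero_iff.1 (by rw [trace_sub, hρ, hσ.2, sub_self])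
    exact ⟨σ, hσ, by rw [one_smul, sub_self, zero_smul, add_zero, sub_eq_zero.1 hρσ]⟩
  · have hp' : 0 < 1 - p := sub_pos.2 hp
    refine ⟨(1 - p)⁻¹ • (ρ - p • σ), ⟨h.smul (inv_nonneg.2 hp'.le), ?_⟩, ?_⟩
    · have : ((1 : ℂ) - p) ≠ 0 := by exact_mod_cast hp'.ne'
      simp only [trace_smul, trace_sub, hρ, hσ.2, Complex.real_smul, mul_one, Complex.ofReal_inv,
        Complex.ofReal_sub, Complex.ofReal_one]
      field_simp
    · rw [smul_smul, mul_inv_cancel₀ hp'.ne', one_smul, add_sub_cancel]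

end

/-- **Theorem 3.** When one of the two states is the pure state `|ψ⟩⟨ψ|`, the
compatibility equals `√p`, where `p` is the largest `q ∈ [0, 1]` such that
`ρA - q • |ψ⟩⟨ψ|` is positive semidefinite. -/
theorem compat_with_pure_state {n : ℕ}
    (ρA : Matrix (Fin n) (Fin n) ℂ) (hA : IsDensityMatrix ρA)
    (ψ : Fin n → ℂ) (hψ : star ψ ⬝ᵥ ψ = 1) (p : ℝ)
    (hp : IsGreatest {q : ℝ | q ∈ Set.Icc (0 : ℝ) 1 ∧
      (ρA - q • pureState ψ).PosSemidef} p) :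
    compat ρA (pureState ψ) = Real.sqrt p := by
  obtain ⟨⟨⟨hp0, hp1⟩, hpA⟩, hpmax⟩ := hp
  obtain ⟨τ, hτ, hρA⟩ :=
    exists_isDensityMatrix_smul_add_smul hA.2 (isDensityMatrix_pureState hψ) hp1 hpA
  refine IsGreatest.csSup_eq ⟨⟨2, ![pureState ψ, τ], ![p, 1 - p], ![1, 0], ?_⟩, ?_⟩
  · simp [Fin.forall_fin_two, isDensityMatrix_pureState hψ, hτ, hp0, hp1, hρA]
  · rintro _ ⟨m, σ, pσ, qσ, hσ, hpσ, hqσ, hpsum, hqsum, hpσA, hqσψ, rfl⟩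
    exact sum_sqrt_mul_le_sqrt_of_sum_smul_eq hψ hpmax hσ hpσ hqσ hpsum hqsum hpσA hqσψ
end

section
/- Let ρ_A and ρ_B be density matrices on ℂ^n. Then C(ρ_A, ρ_B) = 1 if and only if ρ_A = ρ_B. -/
open Matrix BigOperators
open scoped ComplexOrder

/-!
Writing `c = ∑ √(pᵢ qᵢ)`, Cauchy–Schwarz applied to `|pᵢ - qᵢ| = |√pᵢ - √qᵢ| (√pᵢ + √qᵢ)` gives
`(∑ |pᵢ - qᵢ|)² ≤ (2 - 2c)(2 + 2c)`, i.e. the overlap is at most `√(1 - (∑ |pᵢ - qᵢ|)² / 4)`.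
The entries of a density matrix have modulus at most `1` (its `2 × 2` principal minors are
nonnegative), so every entry of `ρA - ρB = ∑ (pᵢ - qᵢ) σᵢ` has modulus at most `∑ |pᵢ - qᵢ|`.
Hence `C(ρA, ρB) ≤ √(1 - |(ρA - ρB)ⱼₖ|² / 4)` for all `j, k`, which forces `ρA = ρB` when
`C(ρA, ρB) = 1`; conversely the one-term decomposition `σ = ρ` has overlap `1`.
-/

open Finset

section Bhattacharyya

variable {ι : Type*} [Fintype ι] {p q : ι → ℝ}

theorem sq_sum_abs_sub_le (hp : ∀ i, 0 ≤ p i) (hq : ∀ i, 0 ≤ q i) (hp1 : ∑ i, p i = 1)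
    (hq1 : ∑ i, q i = 1) :
    (∑ i, |p i - q i|) ^ 2 ≤ 4 * (1 - (∑ i, √(p i * q i)) ^ 2) := by
  set c := ∑ i, √(p i * q i)
  have sq_sqrt_add (s : ℝ) (i : ι) :
      (√(p i) + s * √(q i)) ^ 2 = p i + s ^ 2 * q i + 2 * s * √(p i * q i) := by
    rw [add_sq, mul_pow, Real.sq_sqrt (hp i), Real.sq_sqrt (hq i), Real.sqrt_mul (hp i)]
    ring
  have sum_sq_sqrt_add (s : ℝ) : ∑ i, (√(p i) + s * √(q i)) ^ 2 = 1 + s ^ 2 + 2 * s * c := by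
    simp only [sq_sqrt_add, sum_add_distrib, ← mul_sum, hp1, hq1, mul_one, c]
  have abs_sub_eq (i : ι) : |p i - q i| = |√(p i) - √(q i)| * (√(p i) + √(q i)) := by
    rw [← abs_of_nonneg (by positivity : 0 ≤ √(p i) + √(q i)), ← abs_mul, mul_comm,
      ← sq_sub_sq, Real.sq_sqrt (hp i), Real.sq_sqrt (hq i)]
  calc (∑ i, |p i - q i|) ^ 2
      ≤ (∑ i, |√(p i) - √(q i)| ^ 2) * ∑ i, (√(p i) + √(q i)) ^ 2 := by
        simp only [abs_sub_eq]; exact sum_mul_sq_le_sq_mul_sq _ _ _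
    _ = (∑ i, (√(p i) + (-1) * √(q i)) ^ 2) * ∑ i, (√(p i) + 1 * √(q i)) ^ 2 := by
        simp only [sq_abs, neg_one_mul, one_mul, ← sub_eq_add_neg]
    _ = 4 * (1 - c ^ 2) := by rw [sum_sq_sqrt_add, sum_sq_sqrt_add]; ring

theorem sum_sqrt_mul_le_sqrt_one_sub (hp : ∀ i, 0 ≤ p i) (hq : ∀ i, 0 ≤ q i)
    (hp1 : ∑ i, p i = 1) (hq1 : ∑ i, q i = 1) :
    ∑ i, √(p i * q i) ≤ √(1 - (∑ i, |p i - q i|) ^ 2 / 4) :=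
  (le_abs_self _).trans <| Real.abs_le_sqrt <| by
    linarith [sq_sum_abs_sub_le hp hq hp1 hq1]

end Bhattacharyya

theorem Matrix.PosSemidef.norm_apply_sq_le {n 𝕜 : Type*} [Fintype n] [RCLike 𝕜]
    {A : Matrix n n 𝕜} (hA : A.PosSemidef) (j k : n) :
    ‖A j k‖ ^ 2 ≤ RCLike.re (A j j) * RCLike.re (A k k) := by
  have hdet := (hA.submatrix ![j, k]).det_nonneg
  have hkj : A k j = star (A j k) := (hA.1.apply k j).symm
  rw [det_fin_two] at hdet
  simp only [submatrix_apply, Matrix.cons_val_zero, Matrix.cons_val_one, hkj, RCLike.star_def,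
    RCLike.mul_conj] at hdet
  rw [← hA.1.coe_re_apply_self j, ← hA.1.coe_re_apply_self k] at hdet
  norm_cast at hdet
  linarith

section DensityMatrix

variable {d : Type*} [Fintype d] [DecidableEq d]

theorem IsDensityMatrix.re_apply_self_le_one {σ : Matrix d d ℂ} (hσ : IsDensityMatrix σ)
    (j : d) : (σ j j).re ≤ 1 := by
  have hsum : ∑ l, (σ l l).re = 1 := by
    simpa [trace, Complex.re_sum] using congrArg Complex.re hσ.2
  rw [← hsum]
  exact single_le_sum (fun l _ => (Complex.nonneg_iff.mp (hσ.1.diag_nonneg (i := l))).1)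
    (mem_univ j)

theorem IsDensityMatrix.norm_apply_le_one {σ : Matrix d d ℂ} (hσ : IsDensityMatrix σ)
    (j k : d) : ‖σ j k‖ ≤ 1 := by
  have hk : 0 ≤ (σ k k).re := (Complex.nonneg_iff.mp hσ.1.diag_nonneg).1
  refine (sq_le_one_iff₀ (norm_nonneg _)).mp ((hσ.1.norm_apply_sq_le j k).trans ?_)
  exact mul_le_one₀ (hσ.re_apply_self_le_one j) hk (hσ.re_apply_self_le_one k)

theorem norm_sum_smul_sub_sum_smul_apply_le {ι : Type*} [Fintype ι] {σ : ι → Matrix d d ℂ}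
    (hσ : ∀ i, IsDensityMatrix (σ i)) (p q : ι → ℝ) (j k : d) :
    ‖(∑ i, p i • σ i) j k - (∑ i, q i • σ i) j k‖ ≤ ∑ i, |p i - q i| := by
  rw [← Matrix.sub_apply, ← sum_sub_distrib]
  simp only [← sub_smul, Matrix.sum_apply, Matrix.smul_apply]
  refine (norm_sum_le _ _).trans (sum_le_sum fun i _ => ?_)
  rw [norm_smul, Real.norm_eq_abs]
  exact mul_le_of_le_one_right (abs_nonneg _) ((hσ i).norm_apply_le_one j k)

end DensityMatrix

section Compat

variable {d : Type*} [Fintype d] [DecidableEq d]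

def compatOverlaps (ρA ρB : Matrix d d ℂ) : Set ℝ :=
  { c : ℝ | ∃ (m : ℕ) (σ : Fin m → Matrix d d ℂ) (p q : Fin m → ℝ),
    (∀ i, IsDensityMatrix (σ i)) ∧ (∀ i, 0 ≤ p i) ∧ (∀ i, 0 ≤ q i) ∧
    ∑ i, p i = 1 ∧ ∑ i, q i = 1 ∧
    ∑ i, p i • σ i = ρA ∧ ∑ i, q i • σ i = ρB ∧
    c = ∑ i, Real.sqrt (p i * q i) }

theorem compat_eq_sSup_compatOverlaps (ρA ρB : Matrix d d ℂ) :
    compat ρA ρB = sSup (compatOverlaps ρA ρB) :=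
  rfl

theorem compatOverlaps_nonempty {ρA ρB : Matrix d d ℂ} (hA : IsDensityMatrix ρA)
    (hB : IsDensityMatrix ρB) : (compatOverlaps ρA ρB).Nonempty := by
  refine ⟨0, 2, ![ρA, ρB], ![1, 0], ![0, 1], fun i => ?_, fun i => ?_, fun i => ?_, ?_⟩
  · fin_cases i <;> assumption
  · fin_cases i <;> norm_num
  · fin_cases i <;> norm_num
  · simp [Fin.sum_univ_two]

theorem one_mem_compatOverlaps_self {ρ : Matrix d d ℂ} (h : IsDensityMatrix ρ) :
    1 ∈ compatOverlaps ρ ρ :=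
  ⟨1, fun _ => ρ, fun _ => 1, fun _ => 1, fun _ => h, fun _ => zero_le_one, fun _ => zero_le_one,
    by simp, by simp, by simp, by simp, by simp⟩

theorem le_sqrt_of_mem_compatOverlaps {ρA ρB : Matrix d d ℂ} {c : ℝ}
    (hc : c ∈ compatOverlaps ρA ρB) (j k : d) : c ≤ √(1 - ‖ρA j k - ρB j k‖ ^ 2 / 4) := by
  obtain ⟨m, σ, p, q, hσ, hp, hq, hp1, hq1, rfl, rfl, rfl⟩ := hc
  refine (sum_sqrt_mul_le_sqrt_one_sub hp hq hp1 hq1).trans (Real.sqrt_le_sqrt ?_)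
  gcongr
  exact norm_sum_smul_sub_sum_smul_apply_le hσ p q j k

theorem le_one_of_mem_compatOverlaps {ρA ρB : Matrix d d ℂ} {c : ℝ}
    (hc : c ∈ compatOverlaps ρA ρB) : c ≤ 1 := by
  obtain ⟨m, σ, p, q, -, hp, hq, hp1, hq1, -, -, rfl⟩ := hc
  exact (sum_sqrt_mul_le_sqrt_one_sub hp hq hp1 hq1).trans
    (Real.sqrt_le_one.mpr (sub_le_self _ (by positivity)))

theorem compat_le_sqrt {ρA ρB : Matrix d d ℂ} (hA : IsDensityMatrix ρA)
    (hB : IsDensityMatrix ρB) (j k : d) :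
    compat ρA ρB ≤ √(1 - ‖ρA j k - ρB j k‖ ^ 2 / 4) := by
  rw [compat_eq_sSup_compatOverlaps]
  exact csSup_le (compatOverlaps_nonempty hA hB) fun _ hc => le_sqrt_of_mem_compatOverlaps hc j k

theorem compat_self {ρ : Matrix d d ℂ} (h : IsDensityMatrix ρ) : compat ρ ρ = 1 := by
  rw [compat_eq_sSup_compatOverlaps]
  exact le_antisymm (csSup_le (compatOverlaps_nonempty h h) fun _ => le_one_of_mem_compatOverlaps)
    (le_csSup ⟨1, fun _ => le_one_of_mem_compatOverlaps⟩ (one_mem_compatOverlaps_self h))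

end Compat

/-- **P5.** The compatibility equals `1` exactly when the two density matrices
coincide. -/
theorem compat_eq_one_iff {n : ℕ}
    (ρA ρB : Matrix (Fin n) (Fin n) ℂ)
    (hA : IsDensityMatrix ρA) (hB : IsDensityMatrix ρB) :
    compat ρA ρB = 1 ↔ ρA = ρB := by
  refine ⟨fun h => ?_, fun h => h ▸ compat_self hA⟩
  ext j k
  have hle := compat_le_sqrt hA hB j k
  rw [h, Real.one_le_sqrt] at hle
  have hsq : ‖ρA j k - ρB j k‖ ^ 2 = 0 := le_antisymm (by linarith) (sq_nonneg _)
  rwa [sq_eq_zero_iff, norm_eq_zero, sub_eq_zero] at hsq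
end
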